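/- Let A = I₂, B = D = [[1,1],[1,3]], C = [[-0.5,0.5],[0.5,0.5]], M = B (so m = 2, γ₀ = (0,0), γ₁ = (1,2)), and let a ∈ l²(ℤ²) be the sequence with a((−1,−1)) = c₁, a((−1,−2)) = c₂, and a(k) = 0 otherwise, where c₁, c₂ ∈ ℝ and c₂ ≠ 0. Then the 2×2 matrix A_M(ξ) = [[e₀⁰, e₀¹],[e₁⁰(L_M a)(ξ), e₁¹(L_M a)(ξ+γ₁)]] satisfies |det(A_M(ξ))| = √2 |c₂| > 0 for every ξ ∈ ℝ², where e₀⁰ = e^{−iπ(ξ₁²+ξ₂²)}, e₀¹ = e^{−iπ[(ξ₁+1)²+(ξ₂+2)²]}, e₁⁰ = (e₀⁰)², e₁¹ = (e₀¹)². -/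

import Mathlib

open MeasureTheory Matrix Complex

noncomputable section

abbrev V2 : Type := Fin 2 → ℝ
abbrev Z2 : Type := Fin 2 → ℤ
abbrev M2 : Type := Matrix (Fin 2) (Fin 2) ℝ

/-- cast an integer vector to a real vector -/
def zc (k : Z2) : V2 := fun i => (k i : ℝ)

/-- `ePi r = e^{iπ r}` -/
def ePi (r : ℝ) : ℂ := Complex.exp (Real.pi * Complex.I * r)

/-- quadratic/bilinear form `xᵀ P y` -/
def Q (P : M2) (x y : V2) : ℝ := x ⬝ᵥ P.mulVec y

/-- `√(det (iB))` (note `det(iB) = i² det B` for 2×2 `B`) -/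
def sdet (B : M2) : ℂ := ((Complex.I ^ 2 * (B.det : ℂ))) ^ ((1 : ℂ)/2)

/-- the chirp `λ_M(t) = e^{iπ tᵀB⁻¹At}` -/
def lam (A B : M2) (t : V2) : ℂ := ePi (Q (B⁻¹ * A) t t)

/-- the continuous 2D non-separable LCT -/
def LCT (A B D : M2) (f : V2 → ℂ) (ξ : V2) : ℂ :=
  (sdet B)⁻¹ * ∫ u : V2, f u * ePi (Q (B⁻¹ * A) u u - 2 * Q B⁻¹ u ξ + Q (D * B⁻¹) ξ ξ)

/-- the 2D discrete-time non-separable LCT -/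
def DLCT (A B D : M2) (s : Z2 → ℂ) (ξ : V2) : ℂ :=
  (sdet B)⁻¹ * ∑' k : Z2,
    s k * ePi (Q (B⁻¹ * A) (zc k) (zc k) - 2 * Q B⁻¹ (zc k) ξ + Q (D * B⁻¹) ξ ξ)

/-- the canonical (continuous) convolution `⋆_c` -/
def cconv (A B : M2) (f g : V2 → ℂ) (t : V2) : ℂ :=
  ePi (-(Q (B⁻¹ * A) t t)) * (sdet B)⁻¹ *
    ∫ x : V2, lam A B (t - x) * f (t - x) * (lam A B x * g x)

/-- the canonical semi-discrete convolution `⋆_{sd}` -/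
def sdconv (A B : M2) (s : Z2 → ℂ) (g : V2 → ℂ) (t : V2) : ℂ :=
  ePi (-(Q (B⁻¹ * A) t t)) * (sdet B)⁻¹ *
    ∑' k : Z2, lam A B (zc k) * s k * (lam A B (t - zc k) * g (t - zc k))

/-- the canonical discrete convolution `⋆_d` -/
def dconv (A B : M2) (s c : Z2 → ℂ) (l : Z2) : ℂ :=
  ePi (-(Q (B⁻¹ * A) (zc l) (zc l))) * (sdet B)⁻¹ *
    ∑' k : Z2, lam A B (zc k) * s k * (lam A B (zc (l - k)) * c (l - k))

/-- symplecticity of the block matrix `[A,B;C,D]` -/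
def Symp (A B C D : M2) : Prop :=
  A * Bᵀ = B * Aᵀ ∧ C * Dᵀ = D * Cᵀ ∧ A * Dᵀ - B * Cᵀ = 1

/-- the unit half-open square `[0,1)²` -/
def box : Set V2 := Set.univ.pi fun _ => Set.Ico (0:ℝ) 1

/-- real cast of an integer matrix -/
def Mr (M : Matrix (Fin 2) (Fin 2) ℤ) : M2 := M.map (Int.cast : ℤ → ℝ)

/-- the set `N(M)` of integer points in the fundamental parallelepiped -/
def NM (M : Matrix (Fin 2) (Fin 2) ℤ) : Set Z2 :=
  {k : Z2 | ∃ x : V2, x ∈ box ∧ zc k = (Mr M).mulVec x}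

/-- the discrete time Fourier transform -/
def DTFT (d : Z2 → ℂ) (ξ : V2) : ℂ := ∑' k : Z2, d k * ePi (-(2 * (zc k ⬝ᵥ ξ)))

lemma ePi_mul (a b : ℝ) : ePi a * ePi b = ePi (a+b) := by
  unfold ePi; rw [← Complex.exp_add]; congr 1; push_cast; ring

lemma ePi_comb (a b c : ℝ) : ePi a * ePi b ^ 2 * ePi c = ePi (a + 2*b + c) := by
  rw [sq, mul_assoc (ePi a), ePi_mul, ePi_mul, ePi_mul]; congr 1; ring

lemma ePi_two : ePi 2 = 1 := by
  unfold ePi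
  rw [show (Real.pi : ℂ) * Complex.I * (2:ℝ) = 2 * Real.pi * Complex.I by push_cast; ring,
    Complex.exp_two_pi_mul_I]

lemma ePi_one : ePi 1 = -1 := by
  unfold ePi
  rw [show (Real.pi : ℂ) * Complex.I * (1:ℝ) = Real.pi * Complex.I by push_cast; ring,
    Complex.exp_pi_mul_I]

lemma ePi_three : ePi 3 = -1 := by
  rw [show (3:ℝ) = 1 + 2 by norm_num, ← ePi_mul, ePi_one, ePi_two, mul_one]

lemma ePi_norm (r : ℝ) : ‖ePi r‖ = 1 := by
  unfold ePi
  rw [Complex.norm_exp]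
  simp [mul_comm, mul_assoc]

lemma Binv : (!![1,1;1,3] : M2)⁻¹ = !![3/2,-1/2;-1/2,1/2] := by
  apply Matrix.inv_eq_right_inv
  norm_num [Matrix.mul_fin_two, Matrix.one_fin_two]; rw [Matrix.one_fin_two]

lemma BBinv : (!![1,1;1,3] : M2) * (!![1,1;1,3] : M2)⁻¹ = 1 := by
  rw [Binv]; norm_num [Matrix.mul_fin_two, Matrix.one_fin_two]; rw [Matrix.one_fin_two]

lemma sdet_norm : ‖sdet !![1,1;1,3]‖ = Real.sqrt 2 := by
  unfold sdet
  have hd : (!![1,1;1,3] : M2).det = 2 := by norm_num [Matrix.det_fin_two_of]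
  rw [hd, Complex.I_sq]
  rw [show ((1:ℂ)/2) = ((1/2 : ℝ) : ℂ) by norm_num]
  rw [Complex.norm_cpow_real]
  norm_num [Real.sqrt_eq_rpow]

lemma tsum_pair (f : Z2 → ℂ) (k1 k2 : Z2) (h : k1 ≠ k2)
    (hf : ∀ k, k ≠ k1 → k ≠ k2 → f k = 0) : ∑' k, f k = f k1 + f k2 := by
  rw [tsum_eq_sum (s := ({k1, k2} : Finset Z2)) (by intro k hk; simp at hk; exact hf k hk.1 hk.2)]
  rw [Finset.sum_pair h]

lemma DLCT_val (c₁ c₂ : ℝ) (a : Z2 → ℂ)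
    (ha : ∀ k : Z2, a k =
      if k = ![-1, -1] then (c₁ : ℂ) else if k = ![-1, -2] then (c₂ : ℂ) else 0)
    (ξ : V2) :
    DLCT 1 !![1,1;1,3] !![1,1;1,3] a ξ =
      (sdet !![1,1;1,3])⁻¹ *
        (c₁ * ePi (1 + 2 * ξ 0 + (ξ 0 ^ 2 + ξ 1 ^ 2)) +
         c₂ * ePi (3/2 + (ξ 0 + ξ 1) + (ξ 0 ^ 2 + ξ 1 ^ 2))) := by
  unfold DLCT
  congr 1
  rw [tsum_pair _ ![-1,-1] ![-1,-2] (by decide) (by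
    intro k h1 h2
    rw [ha]
    simp [h1, h2])]
  rw [ha, ha]
  norm_num [Matrix.mul_one, Binv, BBinv, Q, zc, Matrix.mulVec, dotProduct,
    Fin.sum_univ_two, Matrix.one_apply]
  congr 2 <;> ring_nf

/-- Concrete example: for the given LCT parameters and the two-point sequence `a`,
the dynamical-sampling matrix `A_M(ξ)` satisfies `|det A_M(ξ)| = √2 |c₂| > 0`. -/
theorem example_det (c₁ c₂ : ℝ) (hc₂ : c₂ ≠ 0)
    (a : Z2 → ℂ)
    (ha : ∀ k : Z2, a k =
      if k = ![-1, -1] then (c₁ : ℂ) else if k = ![-1, -2] then (c₂ : ℂ) else 0) :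
    ∀ ξ : V2,
      let A0 : M2 := 1
      let B0 : M2 := !![1, 1; 1, 3]
      let D0 : M2 := !![1, 1; 1, 3]
      let e00 : ℂ := ePi (-(ξ 0 ^ 2 + ξ 1 ^ 2))
      let e01 : ℂ := ePi (-((ξ 0 + 1) ^ 2 + (ξ 1 + 2) ^ 2))
      let AM : Matrix (Fin 2) (Fin 2) ℂ :=
        !![e00, e01;
           e00 ^ 2 * DLCT A0 B0 D0 a ξ, e01 ^ 2 * DLCT A0 B0 D0 a (ξ + ![1, 2])]
      ‖AM.det‖ = Real.sqrt 2 * |c₂| ∧ 0 < ‖AM.det‖ := by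

  intro ξ
  have hD := DLCT_val c₁ c₂ a ha ξ
  have hD' := DLCT_val c₁ c₂ a ha (ξ + ![1, 2])
  simp only [Pi.add_apply, Matrix.cons_val_zero, Matrix.cons_val_one,
    Matrix.head_cons] at hD'
  set s0 : ℝ := ξ 0 ^ 2 + ξ 1 ^ 2 with hs0
  set s1 : ℝ := (ξ 0 + 1) ^ 2 + (ξ 1 + 2) ^ 2 with hs1
  set w2 : ℝ := 3/2 + (ξ 0 + ξ 1) - s0 - s1 with hw2
  set w1 : ℝ := 1 + 2 * ξ 0 - s0 - s1 with hw1
  have key : ‖(!![ePi (-s0), ePi (-s1);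
      ePi (-s0) ^ 2 * DLCT 1 !![1,1;1,3] !![1,1;1,3] a ξ,
      ePi (-s1) ^ 2 * DLCT 1 !![1,1;1,3] !![1,1;1,3] a (ξ + ![1, 2])] :
        Matrix (Fin 2) (Fin 2) ℂ).det‖ = Real.sqrt 2 * |c₂| := by
    rw [Matrix.det_fin_two_of]
    have hdet : ePi (-s0) * (ePi (-s1) ^ 2 * DLCT 1 !![1,1;1,3] !![1,1;1,3] a (ξ + ![1, 2])) -
        ePi (-s1) * (ePi (-s0) ^ 2 * DLCT 1 !![1,1;1,3] !![1,1;1,3] a ξ) =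
        (sdet !![1,1;1,3])⁻¹ * (-2 * (c₂ : ℂ) * ePi w2) := by
      rw [hD, hD']
      calc ePi (-s0) * (ePi (-s1) ^ 2 * ((sdet !![1,1;1,3])⁻¹ *
              (c₁ * ePi (1 + 2 * (ξ 0 + 1) + s1) + c₂ * ePi (3/2 + (ξ 0 + 1 + (ξ 1 + 2)) + s1)))) -
            ePi (-s1) * (ePi (-s0) ^ 2 * ((sdet !![1,1;1,3])⁻¹ *
              (c₁ * ePi (1 + 2 * ξ 0 + s0) + c₂ * ePi (3/2 + (ξ 0 + ξ 1) + s0))))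
          = (sdet !![1,1;1,3])⁻¹ *
              (c₁ * (ePi (-s0) * ePi (-s1) ^ 2 * ePi (1 + 2 * (ξ 0 + 1) + s1)) +
               c₂ * (ePi (-s0) * ePi (-s1) ^ 2 * ePi (3/2 + (ξ 0 + 1 + (ξ 1 + 2)) + s1)) -
               c₁ * (ePi (-s1) * ePi (-s0) ^ 2 * ePi (1 + 2 * ξ 0 + s0)) -
               c₂ * (ePi (-s1) * ePi (-s0) ^ 2 * ePi (3/2 + (ξ 0 + ξ 1) + s0))) := by ring
        _ = (sdet !![1,1;1,3])⁻¹ *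
              (c₁ * ePi (-s0 + 2 * (-s1) + (1 + 2 * (ξ 0 + 1) + s1)) +
               c₂ * ePi (-s0 + 2 * (-s1) + (3/2 + (ξ 0 + 1 + (ξ 1 + 2)) + s1)) -
               c₁ * ePi (-s1 + 2 * (-s0) + (1 + 2 * ξ 0 + s0)) -
               c₂ * ePi (-s1 + 2 * (-s0) + (3/2 + (ξ 0 + ξ 1) + s0))) := by
            rw [ePi_comb, ePi_comb, ePi_comb, ePi_comb]
        _ = (sdet !![1,1;1,3])⁻¹ *
              (c₁ * ePi (w1 + 2) + c₂ * ePi (w2 + 3) - c₁ * ePi w1 - c₂ * ePi w2) := by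
            rw [show -s0 + 2 * (-s1) + (1 + 2 * (ξ 0 + 1) + s1) = w1 + 2 by rw [hw1, hs0, hs1]; ring,
                show -s0 + 2 * (-s1) + (3/2 + (ξ 0 + 1 + (ξ 1 + 2)) + s1) = w2 + 3 by
                  rw [hw2, hs0, hs1]; ring,
                show -s1 + 2 * (-s0) + (1 + 2 * ξ 0 + s0) = w1 by rw [hw1, hs0, hs1]; ring,
                show -s1 + 2 * (-s0) + (3/2 + (ξ 0 + ξ 1) + s0) = w2 by rw [hw2, hs0, hs1]; ring]
        _ = (sdet !![1,1;1,3])⁻¹ * (-2 * (c₂ : ℂ) * ePi w2) := by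
            rw [← ePi_mul w1 2, ← ePi_mul w2 3, ePi_two, ePi_three]; ring
    rw [hdet, norm_mul, norm_mul, norm_inv, sdet_norm, ePi_norm, mul_one]
    rw [show ‖(-2 : ℂ) * (c₂ : ℂ)‖ = 2 * |c₂| by
      rw [norm_mul]; simp [Complex.norm_real, Real.norm_eq_abs]]
    have h2 : Real.sqrt 2 * Real.sqrt 2 = 2 := Real.mul_self_sqrt (by norm_num)
    have hpos : (0:ℝ) < Real.sqrt 2 := Real.sqrt_pos.mpr (by norm_num)
    field_simp
    nlinarith [h2, abs_nonneg c₂]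
  refine ⟨key, key ▸ ?_⟩
  have : |c₂| > 0 := abs_pos.mpr hc₂
  positivity
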